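/- arXiv:0904.1315 — 2 statements merged into one kernel-verified Lean document; each statement's English description precedes it below -/
import Mathlib

section
/- For every natural number n there exists an odd positive integer M such that neither M + 2^k nor |M - 2^k| is a prime power for any k ≤ n, and M > n. -/
/-!
For each `k ≤ n` reserve four primes of their own. By the Chinese remainder theorem there are
arbitrarily large odd `M` with `M ≡ -2^k` modulo the first two and `M ≡ 2^k` modulo the other two.
Then each of `M + 2^k` and `M - 2^k` has two distinct prime factors, so it is not a prime power.
-/

open Nat Function

lemma not_isPrimePow_of_dvd_of_dvd {x p q : ℕ} (hp : p.Prime) (hq : q.Prime) (hpq : p ≠ q)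
    (hpx : p ∣ x) (hqx : q ∣ x) : ¬ IsPrimePow x := fun h =>
  hpq ((isPrimePow_iff_unique_prime_dvd.mp h).unique ⟨hp, hpx⟩ ⟨hq, hqx⟩)

lemma Int.exists_nat_gt_forall_modEq {ι : Type*} (t : Finset ι) {m : ι → ℕ}
    (hm : ∀ i ∈ t, m i ≠ 0) (hcop : Set.Pairwise t (Nat.Coprime on m)) (c : ι → ℤ) (B : ℕ) :
    ∃ M : ℕ, B < M ∧ ∀ i ∈ t, (M : ℤ) ≡ c i [ZMOD m i] := by
  obtain ⟨K, hK⟩ := Nat.chineseRemainderOfFinset (fun i => (c i % m i).toNat) m t hm hcop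
  have hprod : 0 < ∏ i ∈ t, m i := Finset.prod_pos fun i hi => Nat.pos_of_ne_zero (hm i hi)
  refine ⟨K + (B + 1) * ∏ i ∈ t, m i, by nlinarith, fun i hi => ?_⟩
  have hmi : (m i : ℤ) ∣ (B + 1) * ∏ j ∈ t, (m j : ℤ) := by
    exact_mod_cast (Finset.dvd_prod_of_mem m hi).mul_left (B + 1)
  calc ((K + (B + 1) * ∏ j ∈ t, m j : ℕ) : ℤ)
      ≡ K + 0 [ZMOD m i] := by
        push_cast; exact (Int.ModEq.refl _).add (Int.modEq_zero_iff_dvd.mpr hmi)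
    _ = K := add_zero _
    _ ≡ (c i % m i).toNat [ZMOD m i] := Int.natCast_modEq_iff.mpr (hK i hi)
    _ = c i % m i := Int.toNat_of_nonneg (Int.emod_nonneg _ (by exact_mod_cast hm i hi))
    _ ≡ c i [ZMOD m i] := Int.mod_modEq _ _

/-- The residue prescribed modulo the prime `nth Nat.Prime i`: `1` modulo `2`, and `-2^k, -2^k,
2^k, 2^k` modulo the primes of index `4k+1, …, 4k+4`. -/
def coveringResidue : ℕ → ℤ
  | 0 => 1
  | i + 1 => if i % 4 < 2 then -2 ^ (i / 4) else 2 ^ (i / 4)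

lemma coveringResidue_four_mul_add_one {k j : ℕ} (hj : j < 2) :
    coveringResidue (4 * k + j + 1) = -2 ^ k := by
  rw [coveringResidue, if_pos (by omega), show (4 * k + j) / 4 = k by omega]

lemma coveringResidue_four_mul_add_three {k j : ℕ} (hj : j < 2) :
    coveringResidue (4 * k + j + 3) = 2 ^ k := by
  rw [show 4 * k + j + 3 = (4 * k + j + 2) + 1 by ring, coveringResidue, if_neg (by omega),
    show (4 * k + j + 2) / 4 = k by omega]

lemma exists_odd_gt_forall_nth_prime_dvd (n B : ℕ) :
    ∃ M : ℕ, Odd M ∧ B < M ∧ ∀ k ≤ n, ∀ j < 2,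
      nth Nat.Prime (4 * k + j + 1) ∣ M + 2 ^ k ∧
      nth Nat.Prime (4 * k + j + 3) ∣ (M - 2 ^ k : ℤ).natAbs := by
  have hcop : Set.Pairwise (Finset.range (4 * n + 5) : Set ℕ) (Nat.Coprime on nth Nat.Prime) :=
    fun i _ j _ hij => (Nat.coprime_primes (prime_nth_prime i) (prime_nth_prime j)).mpr
      ((nth_injective infinite_setOfPred_prime).ne hij)
  obtain ⟨M, hBM, hM⟩ := Int.exists_nat_gt_forall_modEq (Finset.range (4 * n + 5))
    (fun i _ => (prime_nth_prime i).ne_zero) hcop coveringResidue B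
  refine ⟨M, ?_, hBM, fun k hk j hj => ⟨?_, ?_⟩⟩
  · have h2 := hM 0 (by simp)
    rw [nth_prime_zero_eq_two, coveringResidue, Int.ModEq] at h2
    rw [Nat.odd_iff]
    omega
  · have h := (hM (4 * k + j + 1) (by simp; omega)).symm.dvd
    rw [coveringResidue_four_mul_add_one hj, sub_neg_eq_add] at h
    exact_mod_cast h
  · have h := (hM (4 * k + j + 3) (by simp; omega)).symm.dvd
    rw [coveringResidue_four_mul_add_three hj] at h
    exact Int.natCast_dvd.mp h

theorem cohen_selfridge_finitary (n : ℕ) :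
    ∃ M : ℕ, Odd M ∧ 0 < M ∧ M > n ∧ ∀ k : ℕ, k ≤ n →
      ¬ IsPrimePow (M + 2 ^ k) ∧
      ¬ IsPrimePow ((M - 2 ^ k : ℤ).natAbs) := by
  obtain ⟨M, hodd, hnM, hdvd⟩ := exists_odd_gt_forall_nth_prime_dvd n n
  have hne (i : ℕ) : nth Nat.Prime i ≠ nth Nat.Prime (i + 1) :=
    (nth_injective infinite_setOfPred_prime).ne (by omega)
  refine ⟨M, hodd, by omega, hnM, fun k hk => ⟨?_, ?_⟩⟩
  · exact not_isPrimePow_of_dvd_of_dvd (prime_nth_prime _) (prime_nth_prime _) (hne _)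
      (hdvd k hk 0 (by omega)).1 (hdvd k hk 1 (by omega)).1
  · exact not_isPrimePow_of_dvd_of_dvd (prime_nth_prime _) (prime_nth_prime _) (hne _)
      (hdvd k hk 0 (by omega)).2 (hdvd k hk 1 (by omega)).2
end

section
/- In a free group F on generators x₁, …, xₙ, the quotient of F by the normal closure of the set of iterated commutators [x_{i₁}, …, x_{i_k}] (k ≥ 2) in which some index repeats is a torsion-free group. -/
open scoped commutatorElement

/-- A monoid is torsion-free if no nontrivial element has finite order
(the former Mathlib `Monoid.IsTorsionFree`, removed since). -/
def Monoid.IsTorsionFree (G : Type*) [Monoid G] : Prop :=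
  ∀ g : G, g ≠ 1 → ¬IsOfFinOrder g

/-- Left-normed iterated commutator of a list of group elements. -/
def leftComm {G : Type*} [Group G] : List G → G
  | [] => 1
  | a :: t => t.foldl (fun acc b => ⁅acc, b⁆) a

/-!
Write `K α` for the free group on `α` modulo the left-normed commutators with a repeated letter;
it suffices to pass from `K α` to `K (Option α)`. Killing the new generator `none` is a retraction
`K (Option α) → K α` whose kernel lies in the subgroup `Z` generated by the commutators
`z w = [x_none, x_{w₁}, …, x_{wₖ}]`. These commute pairwise and
`x_j⁻¹ (z w) x_j = z (w ++ [j]) * z w`, so `Z` is an abelian normal subgroup, and torsion-freeness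
of `K (Option α)` reduces to that of `K α` and of `Z`.

To see that `Z` is free abelian on the `z w` with distinct letters, send `x_i ↦ 1 + E_i`, where
`E_i` acts on `ℤ[words]` by prepending `i` and kills words with a repeated letter. A product of
`E`'s along a word with a repeated letter vanishes, so in `[1 + x, 1 + E_j] - 1` every term beyond
`[x, E_j]` repeats a letter: the image of a left-normed group commutator is `1` plus the
corresponding left-normed ring commutator, which is `0` when a letter repeats. The images of the
`z w` are then `1 + L w` with `L w * L w' = 0`, and the coefficient of the word `none :: w'` in
`L w` applied to the empty word is `1` if `w = w'` and `0` otherwise.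
-/

theorem leftComm_append_singleton {G : Type*} [Group G] {l : List G} (hl : l ≠ []) (b : G) :
    leftComm (l ++ [b]) = ⁅leftComm l, b⁆ := by
  obtain ⟨a, t, rfl⟩ := List.exists_cons_of_ne_nil hl
  simp [leftComm, List.foldl_append]

theorem MonoidHom.map_leftComm {G H : Type*} [Group G] [Group H] (f : G →* H) (l : List G) :
    f (leftComm l) = leftComm (l.map f) := by
  induction l using List.reverseRecOn with
  | nil => exact f.map_one
  | append_singleton l b ih =>
    rcases eq_or_ne l [] with rfl | hl
    · rfl
    · rw [leftComm_append_singleton hl, List.map_append, List.map_singleton,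
        leftComm_append_singleton (by simpa using hl), map_commutatorElement, ih]

theorem leftComm_eq_one_of_one_mem {G : Type*} [Group G] {l : List G} (h : (1 : G) ∈ l) :
    leftComm l = 1 := by
  induction l using List.reverseRecOn with
  | nil => rfl
  | append_singleton l b ih =>
    rcases eq_or_ne l [] with rfl | hl
    · simpa [leftComm] using (List.mem_singleton.mp h).symm
    rw [leftComm_append_singleton hl]
    rcases List.mem_append.mp h with h | h
    · rw [ih h, commutatorElement_one_left]
    · rw [← List.mem_singleton.mp h, commutatorElement_one_right]

theorem mul_mul_inv_eq_commutatorElement_inv_mul {G : Type*} [Group G] (a b : G) :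
    b * a * b⁻¹ = ⁅a, b⁆⁻¹ * a := by
  simp only [commutatorElement_def]; group

theorem inv_mul_mul_eq_commutatorElement_mul {G : Type*} [Group G] {a b : G}
    (h : Commute ⁅a, b⁆ b) : b⁻¹ * a * b = ⁅a, b⁆ * a := by
  calc b⁻¹ * a * b = b⁻¹ * (⁅a, b⁆ * b) * a := by rw [commutatorElement_def]; group
    _ = b⁻¹ * (b * ⁅a, b⁆) * a := by rw [h.eq]
    _ = ⁅a, b⁆ * a := by group

theorem Commute.commutatorElement_left {G : Type*} [Group G] {a b c : G} (hac : Commute a c)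
    (h : Commute a (b⁻¹ * c * b)) : Commute ⁅a, b⁆ c := by
  have hconj : Commute (b * a⁻¹ * b⁻¹) c := by
    simpa [mul_assoc] using (Commute.conj_iff b).mpr h.inv_left
  simpa [commutatorElement_def, mul_assoc] using hac.mul_left hconj

theorem Subgroup.normal_closure_of_conj_mem {G : Type*} [Group G] {s t : Set G}
    (ht : closure t = ⊤)
    (hconj : ∀ x ∈ t, ∀ g ∈ s, x * g * x⁻¹ ∈ closure s ∧ x⁻¹ * g * x ∈ closure s) :
    (closure s).Normal := by
  rw [← normalizer_eq_top_iff, eq_top_iff, ← ht, closure_le]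
  intro x hx
  rw [SetLike.mem_coe, mem_normalizer_iff_map_conj_eq, MonoidHom.map_closure]
  refine le_antisymm ((closure_le _).mpr ?_) ((closure_le _).mpr fun g hg => ?_)
  · rintro _ ⟨g, hg, rfl⟩
    exact (hconj x hx g hg).1
  · have : x * (x⁻¹ * g * x) * x⁻¹ = g := by group
    rw [← this, ← MonoidHom.map_closure]
    exact ⟨_, (hconj x hx g hg).2, rfl⟩

theorem Monoid.IsTorsionFree.of_ker {G H : Type*} [Group G] [Group H] (f : G →* H)
    (hH : Monoid.IsTorsionFree H) (hker : ∀ g, f g = 1 → IsOfFinOrder g → g = 1) :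
    Monoid.IsTorsionFree G := by
  intro g hg hfin
  by_cases hfg : f g = 1
  · exact hg (hker g hfg hfin)
  · exact hH (f g) hfg (f.isOfFinOrder hfin)

theorem MonoidHom.injective_of_apply_eq_ofAdd_single {A ι : Type*} [CommGroup A] {f : ι → A}
    (hf : Subgroup.closure (Set.range f) = ⊤) (θ : A →* Multiplicative (ι →₀ ℤ))
    (hθ : ∀ i, θ (f i) = .ofAdd (Finsupp.single i 1)) : Function.Injective θ := by
  refine (injective_iff_map_eq_one θ).mpr fun g hg => ?_
  obtain ⟨m, rfl⟩ := Subgroup.mem_closure_range_iff.mp (hf ▸ Subgroup.mem_top g)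
  have hm : (θ (m.prod (f · ^ ·))).toAdd = m := by
    rw [map_finsuppProd, Finsupp.prod, toAdd_prod]
    simp only [map_zpow, hθ, toAdd_zpow, toAdd_ofAdd, Finsupp.smul_single, Int.zsmul_eq_mul,
      mul_one]
    exact m.sum_single
  rw [hg, toAdd_one] at hm
  simp [← hm]

theorem List.exists_map_some_eq {α : Type*} {l : List (Option α)} (h : none ∉ l) :
    ∃ l' : List α, l'.map some = l := by
  induction l with
  | nil => exact ⟨[], rfl⟩
  | cons o l ih =>
    obtain ⟨a, rfl⟩ := Option.ne_none_iff_exists'.mp fun h' => h (h' ▸ List.mem_cons_self ..)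
    obtain ⟨l', rfl⟩ := ih fun h' => h (List.mem_cons_of_mem _ h')
    exact ⟨a :: l', rfl⟩

-- The empty bracket is `0` rather than `1`, so that
-- `↑(leftComm (l.map u)) = 1 + lieLeftComm (l.map e)` holds also for `l = []`.
def lieLeftComm {L : Type*} [Zero L] [Bracket L L] : List L → L
  | [] => 0
  | a :: t => t.foldl (fun acc b => ⁅acc, b⁆) a

theorem lieLeftComm_append_singleton {L : Type*} [Zero L] [Bracket L L] {l : List L}
    (hl : l ≠ []) (b : L) :
    lieLeftComm (l ++ [b]) = ⁅lieLeftComm l, b⁆ := by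
  obtain ⟨a, t, rfl⟩ := List.exists_cons_of_ne_nil hl
  simp [lieLeftComm, List.foldl_append]

section Units

variable {R : Type*} [Ring R]

theorem one_add_mul_one_sub_of_mul_self_eq_zero {x : R} (hx : x * x = 0) :
    (1 + x) * (1 - x) = 1 := by
  rw [show (1 + x) * (1 - x) = 1 - x * x by noncomm_ring, hx, sub_zero]

theorem one_sub_mul_one_add_of_mul_self_eq_zero {x : R} (hx : x * x = 0) :
    (1 - x) * (1 + x) = 1 := by
  rw [show (1 - x) * (1 + x) = 1 - x * x by noncomm_ring, hx, sub_zero]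

def Units.oneAdd (x : R) (hx : x * x = 0) : Rˣ :=
  ⟨1 + x, 1 - x, one_add_mul_one_sub_of_mul_self_eq_zero hx,
    one_sub_mul_one_add_of_mul_self_eq_zero hx⟩

theorem Units.val_inv_eq_one_sub {u : Rˣ} {x : R} (hu : (u : R) = 1 + x) (hx : x * x = 0) :
    ((u⁻¹ : Rˣ) : R) = 1 - x :=
  Units.inv_eq_of_mul_eq_one_right (hu ▸ one_add_mul_one_sub_of_mul_self_eq_zero hx)

theorem Units.val_commutatorElement_eq_one_add_lie {u v : Rˣ} {x y : R}
    (hu : (u : R) = 1 + x) (hv : (v : R) = 1 + y) (hx : x * x = 0) (hy : y * y = 0)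
    (hxyx : ⁅x, y⁆ * x = 0) (hxyy : ⁅x, y⁆ * y = 0) : ((⁅u, v⁆ : Rˣ) : R) = 1 + ⁅x, y⁆ := by
  have expand : (1 + x) * (1 + y) * (1 - x) * (1 - y) - (1 + ⁅x, y⁆) =
      ⁅x, y⁆ * x * y - ⁅x, y⁆ * x - ⁅x, y⁆ * y - y * y - (1 + y) * (x * x) * (1 - y) := by
    rw [Ring.lie_def]; noncomm_ring
  rw [hxyx, hxyy, hx, hy] at expand
  rw [commutatorElement_def, Units.val_mul, Units.val_mul, Units.val_mul, hu, hv,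
    Units.val_inv_eq_one_sub hu hx, Units.val_inv_eq_one_sub hv hy, ← sub_eq_zero, expand]
  simp

theorem Submodule.mul_eq_add_sub_one {I : Submodule ℤ R} (hI : I * I = ⊥) {x y : R}
    (hx : x - 1 ∈ I) (hy : y - 1 ∈ I) : x * y = x + y - 1 := by
  have h : (x - 1) * (y - 1) = 0 := by simpa [hI] using Submodule.mul_mem_mul hx hy
  rw [← sub_eq_zero, ← h]
  noncomm_ring

def Submodule.oneAddUnits (I : Submodule ℤ R) (hI : I * I = ⊥) : Subgroup Rˣ where
  carrier := {u | (u : R) - 1 ∈ I}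
  one_mem' := by simp
  mul_mem' {u v} hu hv := by
    change (u : R) - 1 ∈ I at hu
    change (v : R) - 1 ∈ I at hv
    change _ ∈ I
    rw [Units.val_mul, Submodule.mul_eq_add_sub_one hI hu hv, add_sub_assoc, add_sub_right_comm]
    exact add_mem hu hv
  inv_mem' {u} hu := by
    change (u : R) - 1 ∈ I at hu
    have hsq : ((u : R) - 1) * ((u : R) - 1) = 0 := by
      simpa [hI] using Submodule.mul_mem_mul hu hu
    change _ ∈ I
    rw [Units.val_inv_eq_one_sub (by abel) hsq, sub_sub_cancel_left]
    exact neg_mem hu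

end Units

section WordSpan

variable {R α : Type*} [Ring R] (e : α → R)

def wordSpan (m : Multiset α) : Submodule ℤ R :=
  Submodule.span ℤ {x | ∃ v : List α, (v : Multiset α) = m ∧ (v.map e).prod = x}

variable {e}

theorem prod_mem_wordSpan (v : List α) : (v.map e).prod ∈ wordSpan e v :=
  Submodule.subset_span ⟨v, rfl, rfl⟩

theorem mul_mem_wordSpan {m m' : Multiset α} {x y : R} (hx : x ∈ wordSpan e m)
    (hy : y ∈ wordSpan e m') : x * y ∈ wordSpan e (m + m') := by
  have : wordSpan e m * wordSpan e m' ≤ wordSpan e (m + m') := by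
    rw [wordSpan, wordSpan, Submodule.span_mul_span]
    refine Submodule.span_mono ?_
    rintro _ ⟨_, ⟨u, rfl, rfl⟩, _, ⟨v, rfl, rfl⟩, rfl⟩
    exact ⟨u ++ v, by simp, by simp⟩
  exact this (Submodule.mul_mem_mul hx hy)

theorem wordSpan_eq_bot (he : ∀ v : List α, ¬ v.Nodup → (v.map e).prod = 0) {m : Multiset α}
    (hm : ¬ m.Nodup) : wordSpan e m = ⊥ := by
  rw [wordSpan, Submodule.span_eq_bot]
  rintro _ ⟨v, rfl, rfl⟩
  exact he v hm

theorem lieLeftComm_mem_wordSpan (l : List α) : lieLeftComm (l.map e) ∈ wordSpan e l := by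
  induction l using List.reverseRecOn with
  | nil => exact zero_mem _
  | append_singleton l b ih =>
    rcases eq_or_ne l [] with rfl | hl
    · simpa [lieLeftComm] using prod_mem_wordSpan (e := e) [b]
    rw [List.map_append, List.map_singleton, lieLeftComm_append_singleton (by simpa using hl),
      Ring.lie_def, ← Multiset.coe_add]
    have hb : e b ∈ wordSpan e [b] := by simpa using prod_mem_wordSpan (e := e) [b]
    refine sub_mem (mul_mem_wordSpan ih hb) ?_
    rw [add_comm]
    exact mul_mem_wordSpan hb ih

end WordSpan

section Expansion

variable {R α : Type*} [Ring R] {e : α → R} (he : ∀ v : List α, ¬ v.Nodup → (v.map e).prod = 0)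
include he

theorem mul_eq_zero_of_mem_wordSpan {m m' : Multiset α} {a : α} (ha : a ∈ m) (ha' : a ∈ m')
    {x y : R} (hx : x ∈ wordSpan e m) (hy : y ∈ wordSpan e m') : x * y = 0 := by
  have hdup : ¬ (m + m').Nodup := fun h =>
    Multiset.disjoint_left.mp (Multiset.nodup_add.mp h).2.2 ha ha'
  simpa [wordSpan_eq_bot he hdup] using mul_mem_wordSpan hx hy

theorem val_leftComm_map_eq_one_add_lieLeftComm (u : α → Rˣ) (hu : ∀ i, (u i : R) = 1 + e i)
    (l : List α) : ((leftComm (l.map u) : Rˣ) : R) = 1 + lieLeftComm (l.map e) := by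
  induction l using List.reverseRecOn with
  | nil => simp [leftComm, lieLeftComm]
  | append_singleton l b ih =>
    rcases eq_or_ne l [] with rfl | hl
    · simp [leftComm, lieLeftComm, hu]
    obtain ⟨a, ha⟩ := List.exists_mem_of_ne_nil l hl
    have hx := lieLeftComm_mem_wordSpan (e := e) l
    have hy : e b ∈ wordSpan e [b] := by simpa using prod_mem_wordSpan (e := e) [b]
    have hxy := lieLeftComm_mem_wordSpan (e := e) (l ++ [b])
    simp only [List.map_append, List.map_singleton] at hxy ⊢
    rw [lieLeftComm_append_singleton (by simpa using hl)] at hxy ⊢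
    rw [leftComm_append_singleton (by simpa using hl)]
    exact Units.val_commutatorElement_eq_one_add_lie ih (hu b)
      (mul_eq_zero_of_mem_wordSpan he ha ha hx hx)
      (mul_eq_zero_of_mem_wordSpan he (List.mem_singleton_self b) (List.mem_singleton_self b) hy hy)
      (mul_eq_zero_of_mem_wordSpan he (List.mem_append_left _ ha) ha hxy hx)
      (mul_eq_zero_of_mem_wordSpan he (List.mem_append_right _ (List.mem_singleton_self b))
        (List.mem_singleton_self b) hxy hy)

theorem leftComm_map_eq_one (u : α → Rˣ) (hu : ∀ i, (u i : R) = 1 + e i) {l : List α}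
    (hl : ¬ l.Nodup) : leftComm (l.map u) = 1 := by
  have h := lieLeftComm_mem_wordSpan (e := e) l
  rw [wordSpan_eq_bot he (by simpa using hl), Submodule.mem_bot] at h
  exact Units.ext (by simp [val_leftComm_map_eq_one_add_lieLeftComm he u hu, h])

theorem lieLeftComm_cons_mul_lieLeftComm_cons (a : α) (w w' : List α) :
    lieLeftComm ((a :: w).map e) * lieLeftComm ((a :: w').map e) = 0 :=
  mul_eq_zero_of_mem_wordSpan he (List.mem_cons_self ..) (List.mem_cons_self ..)
    (lieLeftComm_mem_wordSpan _) (lieLeftComm_mem_wordSpan _)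

end Expansion

def leftCommRelators (α : Type*) : Set (FreeGroup α) :=
  {w | ∃ l : List α, 2 ≤ l.length ∧ ¬ l.Nodup ∧ w = leftComm (l.map FreeGroup.of)}

abbrev CohenK (α : Type*) := FreeGroup α ⧸ Subgroup.normalClosure (leftCommRelators α)

namespace CohenK

variable {α β G : Type*} [Group G]

def of (a : α) : CohenK α := QuotientGroup.mk (FreeGroup.of a)

theorem hom_ext {f g : CohenK α →* G} (h : ∀ a, f (of a) = g (of a)) : f = g :=
  QuotientGroup.monoidHom_ext _ (FreeGroup.ext_hom _ _ h)

theorem closure_range_of : Subgroup.closure (Set.range (of : α → CohenK α)) = ⊤ := by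
  rw [show Set.range (of : α → CohenK α) = QuotientGroup.mk' _ '' Set.range FreeGroup.of from
      Set.range_comp _ _, ← MonoidHom.map_closure, FreeGroup.closure_range_of,
    Subgroup.map_top_of_surjective _ (QuotientGroup.mk'_surjective _)]

theorem leftComm_map_of_eq_one {l : List α} (hl : ¬ l.Nodup) : leftComm (l.map of) = 1 := by
  have hlen : 2 ≤ l.length := by
    rcases l with _ | ⟨a, _ | ⟨b, t⟩⟩ <;> simp_all
  have : l.map of = (l.map FreeGroup.of).map (QuotientGroup.mk' (Subgroup.normalClosure
      (leftCommRelators α))) := by simp [of, Function.comp_def]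
  rw [this, ← MonoidHom.map_leftComm, QuotientGroup.mk'_apply, QuotientGroup.eq_one_iff]
  exact Subgroup.subset_normalClosure ⟨l, hlen, hl, rfl⟩

def lift (f : α → G) (hf : ∀ l : List α, ¬ l.Nodup → leftComm (l.map f) = 1) :
    CohenK α →* G :=
  QuotientGroup.lift _ (FreeGroup.lift f) <| Subgroup.normalClosure_le_normal <| by
    rintro _ ⟨l, -, hl, rfl⟩
    simp [MonoidHom.map_leftComm, hf l hl, Function.comp_def]

@[simp]
theorem lift_of (f : α → G) (hf : ∀ l : List α, ¬ l.Nodup → leftComm (l.map f) = 1) (a : α) :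
    lift f hf (of a) = f a :=
  FreeGroup.lift_apply_of

def map (φ : α → β) : CohenK α →* CohenK β :=
  lift (of ∘ φ) fun l hl => by
    rw [← List.map_map]
    exact leftComm_map_of_eq_one fun h => hl h.of_map

def eraseNone : CohenK (Option α) →* CohenK α :=
  lift (fun o => o.elim 1 of) fun l hl => by
    by_cases hnone : none ∈ l
    · exact leftComm_eq_one_of_one_mem (List.mem_map.mpr ⟨none, hnone, rfl⟩)
    · obtain ⟨l', rfl⟩ := List.exists_map_some_eq hnone
      rw [List.map_map]
      exact leftComm_map_of_eq_one fun h => hl (h.map (Option.some_injective _))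

open Finsupp

section Representation

variable [DecidableEq α]

noncomputable def consOp (i : α) : Module.End ℤ (List α →₀ ℤ) :=
  linearCombination ℤ fun t => if (i :: t).Nodup then single (i :: t) 1 else 0

theorem consOp_single (i : α) (t : List α) (c : ℤ) :
    consOp i (single t c) = if (i :: t).Nodup then single (i :: t) c else 0 := by
  simp only [consOp, linearCombination_single]
  split_ifs <;> simp

theorem consOp_apply_cons_of_ne {a b : α} (h : b ≠ a) (f : List α →₀ ℤ) (u : List α) :
    consOp b f (a :: u) = 0 := by
  induction f using Finsupp.induction_linear with
  | zero => simp
  | add f g hf hg => simp [hf, hg]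
  | single t c =>
    rw [consOp_single]
    split_ifs <;> simp [h]

theorem prod_map_consOp_cons_single (i : α) (w v : List α) (c : ℤ) :
    ((i :: w).map consOp).prod (single v c) =
      if (i :: (w ++ v)).Nodup then single (i :: (w ++ v)) c else 0 := by
  induction w generalizing i with
  | nil => simp [consOp_single]
  | cons j w ih =>
    rw [List.map_cons, List.prod_cons, Module.End.mul_apply, ih]
    simp only [List.cons_append]
    split_ifs with h1 h2 h2
    · rw [consOp_single, if_pos h2]
    · rw [consOp_single, if_neg h2]
    · exact absurd h2.of_cons h1
    · simp

theorem prod_map_consOp_eq_zero {v : List α} (hv : ¬ v.Nodup) : (v.map consOp).prod = 0 := by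
  obtain ⟨i, w, rfl⟩ := List.exists_cons_of_ne_nil (l := v) fun h => hv (h ▸ List.nodup_nil)
  refine Finsupp.lhom_ext fun u c => ?_
  rw [prod_map_consOp_cons_single,
    if_neg fun h => hv (h.sublist (List.sublist_append_left _ _))]
  simp

theorem lieLeftComm_consOp_single_apply (a : α) (t : List α) {v : List α}
    (h : (a :: (t ++ v)).Nodup) (u : List α) :
    lieLeftComm ((a :: t).map consOp) (single v 1) (a :: u) = if u = t ++ v then 1 else 0 := by
  induction t using List.reverseRecOn generalizing v with
  | nil =>
    rw [List.nil_append] at h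
    simp [lieLeftComm, consOp_single, h, single_apply, eq_comm]
  | append_singleton t b ih =>
    have hba : b ≠ a := by rintro rfl; simp at h
    have hbv : (b :: v).Nodup := (List.nodup_cons.mp h).2.sublist (by simp)
    rw [← List.cons_append, List.map_append, List.map_singleton,
      lieLeftComm_append_singleton (by simp), Ring.lie_def, LinearMap.sub_apply,
      Module.End.mul_apply, Module.End.mul_apply, consOp_single, if_pos hbv, Finsupp.sub_apply,
      ih (by simpa using h), consOp_apply_cons_of_ne hba, sub_zero]
    simp

noncomputable def consUnit (i : α) : (Module.End ℤ (List α →₀ ℤ))ˣ :=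
  Units.oneAdd (consOp i) (by simpa using prod_map_consOp_eq_zero (v := [i, i]) (by simp))

noncomputable def rep : CohenK α →* (Module.End ℤ (List α →₀ ℤ))ˣ :=
  lift consUnit fun _ hl =>
    leftComm_map_eq_one (fun _ hv => prod_map_consOp_eq_zero hv) consUnit (fun _ => rfl) hl

end Representation

def commNone (w : List (Option α)) : CohenK (Option α) := leftComm ((none :: w).map of)

theorem commNone_append_singleton (w : List (Option α)) (j : Option α) :
    commNone (w ++ [j]) = ⁅commNone w, of j⁆ := by
  rw [commNone, ← List.cons_append, List.map_append, List.map_singleton,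
    leftComm_append_singleton (by simp)]
  rfl

theorem commNone_eq_one {w : List (Option α)} (h : ¬ (none :: w).Nodup) : commNone w = 1 :=
  leftComm_map_of_eq_one h

theorem commute_commNone_append_singleton (w : List (Option α)) (j : Option α) :
    Commute ⁅commNone w, of j⁆ (of j) := by
  rw [← commutatorElement_eq_one_iff_commute, ← commNone_append_singleton,
    ← commNone_append_singleton]
  exact commNone_eq_one (by simp [List.nodup_append])

theorem commute_commNone (w w' : List (Option α)) : Commute (commNone w) (commNone w') := by
  induction w using List.reverseRecOn generalizing w' with
  | nil =>
    have h := commNone_eq_one (w := w' ++ [none]) (by simp)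
    rw [commNone_append_singleton, commutatorElement_eq_one_iff_commute] at h
    exact h.symm
  | append_singleton w j ih =>
    rw [commNone_append_singleton]
    refine (ih w').commutatorElement_left ?_
    rw [inv_mul_mul_eq_commutatorElement_mul (commute_commNone_append_singleton w' j),
      ← commNone_append_singleton]
    exact (ih _).mul_right (ih w')

variable (α) in
abbrev NodupTail := {w : List (Option α) // (none :: w).Nodup}

variable (α) in
def commNoneSubgroup : Subgroup (CohenK (Option α)) :=
  Subgroup.closure (Set.range fun w : NodupTail α => commNone w.1)

theorem commNone_mem (w : List (Option α)) : commNone w ∈ commNoneSubgroup α := by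
  by_cases h : (none :: w).Nodup
  · exact Subgroup.subset_closure ⟨⟨w, h⟩, rfl⟩
  · rw [commNone_eq_one h]
    exact one_mem _

instance : (commNoneSubgroup α).Normal := by
  refine Subgroup.normal_closure_of_conj_mem closure_range_of ?_
  rintro _ ⟨j, rfl⟩ _ ⟨w, rfl⟩
  constructor
  · rw [mul_mul_inv_eq_commutatorElement_inv_mul, ← commNone_append_singleton]
    exact mul_mem (inv_mem (commNone_mem _)) (commNone_mem _)
  · rw [inv_mul_mul_eq_commutatorElement_mul (commute_commNone_append_singleton _ j),
      ← commNone_append_singleton]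
    exact mul_mem (commNone_mem _) (commNone_mem _)

instance : IsMulCommutative (commNoneSubgroup α) :=
  Subgroup.isMulCommutative_closure <| by
    rintro _ ⟨w, rfl⟩ _ ⟨w', rfl⟩
    exact (commute_commNone _ _).eq

theorem ker_eraseNone_le :
    (eraseNone : CohenK (Option α) →* CohenK α).ker ≤ commNoneSubgroup α := by
  have h : (QuotientGroup.mk' (commNoneSubgroup α)).comp ((map some).comp eraseNone) =
      QuotientGroup.mk' _ := by
    refine hom_ext fun o => ?_
    cases o with
    | none =>
      simp only [MonoidHom.comp_apply, eraseNone, lift_of, Option.elim_none, map_one]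
      exact ((QuotientGroup.eq_one_iff _).mpr (commNone_mem [])).symm
    | some a => simp [eraseNone, map]
  intro g hg
  rw [← QuotientGroup.eq_one_iff, ← QuotientGroup.mk'_apply, ← h]
  simp [MonoidHom.mem_ker.mp hg]

noncomputable def noneCoeff :
    Module.End ℤ (List (Option α) →₀ ℤ) →ₗ[ℤ] (NodupTail α →₀ ℤ) :=
  lcomapDomain (fun w => none :: w.1) (List.cons_injective.comp Subtype.val_injective) ∘ₗ
    LinearMap.applyₗ (single [] 1)

theorem noneCoeff_one : noneCoeff (1 : Module.End ℤ (List (Option α) →₀ ℤ)) = 0 := by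
  ext w
  simp [noneCoeff]

section Coordinates

variable [DecidableEq α]

noncomputable abbrev lieCommNone (w : List (Option α)) : Module.End ℤ (List (Option α) →₀ ℤ) :=
  lieLeftComm ((none :: w).map consOp)

theorem val_rep_commNone (w : List (Option α)) :
    (rep (commNone w) : Module.End ℤ (List (Option α) →₀ ℤ)) = 1 + lieCommNone w := by
  rw [commNone, MonoidHom.map_leftComm, List.map_map]
  exact val_leftComm_map_eq_one_add_lieLeftComm (fun _ hv => prod_map_consOp_eq_zero hv)
    consUnit (fun _ => rfl) _

variable (α) in
noncomputable def lieCommNoneSpan :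
    Submodule ℤ (Module.End ℤ (List (Option α) →₀ ℤ)) :=
  Submodule.span ℤ (Set.range lieCommNone)

theorem lieCommNoneSpan_mul_self : lieCommNoneSpan α * lieCommNoneSpan α = ⊥ := by
  rw [lieCommNoneSpan, Submodule.span_mul_span, Submodule.span_eq_bot]
  rintro _ ⟨_, ⟨w, rfl⟩, _, ⟨w', rfl⟩, rfl⟩
  exact lieLeftComm_cons_mul_lieLeftComm_cons (fun _ hv => prod_map_consOp_eq_zero hv) _ _ _

theorem commNoneSubgroup_le_comap_rep :
    commNoneSubgroup α ≤ (Submodule.oneAddUnits _ lieCommNoneSpan_mul_self).comap rep := by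
  rw [commNoneSubgroup, Subgroup.closure_le]
  rintro _ ⟨w, rfl⟩
  change (rep (commNone w.1) : Module.End ℤ _) - 1 ∈ lieCommNoneSpan α
  rw [val_rep_commNone, add_sub_cancel_left]
  exact Submodule.subset_span ⟨w.1, rfl⟩

theorem noneCoeff_lieCommNone (w : NodupTail α) :
    noneCoeff (lieCommNone w.1) = single w 1 := by
  ext w₀
  simp only [noneCoeff, LinearMap.comp_apply, lcomapDomain_apply, comapDomain_apply,
    LinearMap.applyₗ_apply_apply]
  rw [lieLeftComm_consOp_single_apply none w.1 (v := []) (by simpa using w.2)]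
  simp [single_apply, Subtype.ext_iff, eq_comm]

noncomputable def commNoneCoeffs : commNoneSubgroup α →* Multiplicative (NodupTail α →₀ ℤ) where
  toFun g := .ofAdd (noneCoeff (rep (g : CohenK (Option α)) : Module.End ℤ _))
  map_one' := by simp [noneCoeff_one]
  map_mul' g h := by
    have hg := commNoneSubgroup_le_comap_rep g.2
    have hh := commNoneSubgroup_le_comap_rep h.2
    rw [Subgroup.coe_mul, map_mul, Units.val_mul,
      Submodule.mul_eq_add_sub_one lieCommNoneSpan_mul_self hg hh, map_sub, map_add, noneCoeff_one,
      sub_zero, ofAdd_add]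

theorem commNoneCoeffs_commNone (w : NodupTail α) :
    commNoneCoeffs ⟨commNone w.1, commNone_mem _⟩ = .ofAdd (single w 1) := by
  simp [commNoneCoeffs, val_rep_commNone, noneCoeff_one, noneCoeff_lieCommNone]

end Coordinates

open scoped IsMulCommutative in
theorem isMulTorsionFree_commNoneSubgroup : IsMulTorsionFree (commNoneSubgroup α) := by
  classical
  let f (w : NodupTail α) : commNoneSubgroup α :=
    ⟨commNone w.1, commNone_mem _⟩
  have hf : Subgroup.closure (Set.range f) = ⊤ := by
    have hrange : Set.range f = ((↑) : commNoneSubgroup α → CohenK (Option α)) ⁻¹'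
        Set.range fun w : NodupTail α => commNone w.1 := by
      ext g
      exact ⟨by rintro ⟨w, rfl⟩; exact ⟨w, rfl⟩, by rintro ⟨w, hw⟩; exact ⟨w, Subtype.ext hw⟩⟩
    rw [hrange]
    exact Subgroup.closure_closure_coe_preimage
  exact Function.Injective.isMulTorsionFree commNoneCoeffs
    (MonoidHom.injective_of_apply_eq_ofAdd_single hf _ commNoneCoeffs_commNone)

theorem isTorsionFree_option (h : Monoid.IsTorsionFree (CohenK α)) :
    Monoid.IsTorsionFree (CohenK (Option α)) :=
  .of_ker eraseNone h fun g hg hfin => by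
    have := isMulTorsionFree_commNoneSubgroup (α := α)
    have hZ : g ∈ commNoneSubgroup α := ker_eraseNone_le hg
    have hfin' : IsOfFinOrder (⟨g, hZ⟩ : commNoneSubgroup α) :=
      (commNoneSubgroup α).subtype_injective.isOfFinOrder_iff.mp hfin
    exact congrArg Subtype.val hfin'.eq_one'

theorem isTorsionFree (α : Type*) [Finite α] : Monoid.IsTorsionFree (CohenK α) := by
  obtain ⟨_⟩ := nonempty_fintype α
  refine Fintype.induction_empty_option (P := fun α _ => Monoid.IsTorsionFree (CohenK α))
    (fun α β _ e h => ?_) ?_ (fun α _ h => isTorsionFree_option h) α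
  · have hinv : (map e).comp (map e.symm) = MonoidHom.id _ := hom_ext fun b => by simp [map]
    exact .of_ker (map e.symm) h fun g hg _ => by
      simpa [hg] using (DFunLike.congr_fun hinv g).symm
  · intro g hg _
    obtain ⟨x, rfl⟩ := QuotientGroup.mk_surjective g
    exact hg (by rw [Subsingleton.elim x 1]; rfl)

end CohenK

theorem cohen_Kn_torsion_free (n : ℕ) :
    Monoid.IsTorsionFree
      (FreeGroup (Fin n) ⧸ Subgroup.normalClosure
        {w : FreeGroup (Fin n) | ∃ l : List (Fin n),
          2 ≤ l.length ∧ ¬ l.Nodup ∧ w = leftComm (l.map FreeGroup.of)}) :=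
  CohenK.isTorsionFree (Fin n)
end
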